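/- arXiv:2003.04482 — 5 statements merged into one kernel-verified Lean document; each statement's English description precedes it below -/
import Mathlib

section
/- Let Γ ⊆ ℝⁿ be open and permutation-invariant, let f : Γ → ℝ be smooth and symmetric, let Ω be an open set of n×n real matrices, and let F : Ω → ℝ be smooth such that F(A) = f(κ_1, …, κ_n) for every symmetric A ∈ Ω whose eigenvalues (κ_1, …, κ_n) lie in Γ. Then for every symmetric matrix A ∈ Ω whose eigenvalues κ = (κ_1, …, κ_n) lie in Γ, with orthonormal eigenbasis e_1, …, e_n satisfying A e_i = κ_i e_i, and for every symmetric matrix B, the Fréchet derivative of F satisfies DF(A)[B] = ∑_{i=1}^n (∂f/∂κ_i)(κ) ⟨B e_i, e_i⟩. -/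
attribute [local instance] Matrix.normedAddCommGroup Matrix.normedSpace


open Matrix

namespace EigAux

variable {n : ℕ}

/-- mulVec of a rank-one matrix. -/
lemma vmv_mulVec (a b u : Fin n → ℝ) :
    (Matrix.vecMulVec a b) *ᵥ u = (b ⬝ᵥ u) • a := by
  funext m
  simp only [Matrix.mulVec, Matrix.vecMulVec_apply, dotProduct, Pi.smul_apply,
    smul_eq_mul, Finset.sum_mul]
  exact Finset.sum_congr rfl fun x _ => by ring

lemma vmv_transpose (a b : Fin n → ℝ) :
    (Matrix.vecMulVec a b)ᵀ = Matrix.vecMulVec b a := by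
  ext m l; simp [Matrix.vecMulVec_apply, mul_comm]

/-- the "Q" matrix of an orthonormal family -/
lemma QQt (e : Fin n → (Fin n → ℝ))
    (he : ∀ i j, (∑ l, e i l * e j l) = if i = j then (1 : ℝ) else 0) :
    (Matrix.of fun m k => e k m) * (Matrix.of fun m k => e k m)ᵀ = 1 := by
  rw [mul_eq_one_comm]
  ext k l
  simp only [Matrix.mul_apply, Matrix.transpose_apply, Matrix.of_apply]
  rw [he k l]
  simp [Matrix.one_apply]

/-- expansion of a vector in an orthonormal basis -/
lemma onb_expand (e : Fin n → (Fin n → ℝ))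
    (he : ∀ i j, (∑ l, e i l * e j l) = if i = j then (1 : ℝ) else 0)
    (w : Fin n → ℝ) : (∑ i, (w ⬝ᵥ e i) • e i) = w := by
  have h := QQt e he
  have hw : ((Matrix.of fun m k => e k m) * (Matrix.of fun m k => e k m)ᵀ) *ᵥ w = w := by
    rw [h, Matrix.one_mulVec]
  rw [← Matrix.mulVec_mulVec] at hw
  funext m
  have := congrFun hw m
  simp only [Matrix.mulVec, dotProduct, Matrix.transpose_apply, Matrix.of_apply] at this
  rw [Finset.sum_apply]
  simp only [Pi.smul_apply, dotProduct, smul_eq_mul]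
  rw [← this]
  exact Finset.sum_congr rfl fun i _ => by rw [Finset.mul_sum, Finset.sum_mul]; exact Finset.sum_congr rfl fun l _ => by ring

/-- matrices agreeing on an orthonormal basis are equal -/
lemma ext_of_mulVec_eq (e : Fin n → (Fin n → ℝ))
    (he : ∀ i j, (∑ l, e i l * e j l) = if i = j then (1 : ℝ) else 0)
    (M N : Matrix (Fin n) (Fin n) ℝ) (h : ∀ k, M *ᵥ e k = N *ᵥ e k) : M = N := by
  funext m l
  have hw : ∀ w, M *ᵥ w = N *ᵥ w := by
    intro w
    have hexp := onb_expand e he w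
    calc M *ᵥ w = M *ᵥ (∑ i, (w ⬝ᵥ e i) • e i) := by rw [hexp]
      _ = ∑ i, (w ⬝ᵥ e i) • (M *ᵥ e i) := by
          rw [← Matrix.mulVecLin_apply, map_sum]
          simp [Matrix.mulVecLin_apply]
      _ = ∑ i, (w ⬝ᵥ e i) • (N *ᵥ e i) := by simp_rw [h]
      _ = N *ᵥ (∑ i, (w ⬝ᵥ e i) • e i) := by
          rw [← Matrix.mulVecLin_apply, map_sum]
          simp [Matrix.mulVecLin_apply]
      _ = N *ᵥ w := by rw [hexp]
  have := congrFun (hw (Pi.single l 1)) m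
  simpa [Matrix.mulVec_single] using this

end EigAux

namespace EigAux

variable {n : ℕ}

lemma sum_mulVec {ι : Type*} (s : Finset ι) (M : ι → Matrix (Fin n) (Fin n) ℝ)
    (u : Fin n → ℝ) : (∑ k ∈ s, M k) *ᵥ u = ∑ k ∈ s, (M k) *ᵥ u := by
  funext m
  simp only [Matrix.mulVec, dotProduct, Finset.sum_apply, Matrix.sum_apply,
    Finset.sum_mul]
  exact Finset.sum_comm

lemma S_mulVec (κ : Fin n → ℝ) (w : Fin n → (Fin n → ℝ))
    (hw : ∀ i j, (∑ l, w i l * w j l) = if i = j then (1 : ℝ) else 0) (l : Fin n) :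
    (∑ k, κ k • Matrix.vecMulVec (w k) (w k)) *ᵥ w l = κ l • w l := by
  rw [sum_mulVec]
  have : ∀ k, (κ k • Matrix.vecMulVec (w k) (w k)) *ᵥ w l
      = (κ k * if k = l then (1:ℝ) else 0) • w k := by
    intro k
    rw [Matrix.smul_mulVec, vmv_mulVec]
    rw [show (w k ⬝ᵥ w l) = if k = l then (1:ℝ) else 0 from hw k l]
    rw [smul_smul]
  simp_rw [this]
  rw [Finset.sum_eq_single l]
  · simp
  · intro b _ hb; simp [hb]
  · simp

lemma S_isSymm (κ : Fin n → ℝ) (w : Fin n → (Fin n → ℝ)) :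
    (∑ k, κ k • Matrix.vecMulVec (w k) (w k)).IsSymm := by
  unfold Matrix.IsSymm
  rw [Matrix.transpose_sum]
  exact Finset.sum_congr rfl fun k _ => by rw [Matrix.transpose_smul, vmv_transpose]

lemma A_eq_S (A : Matrix (Fin n) (Fin n) ℝ) (κ : Fin n → ℝ) (e : Fin n → (Fin n → ℝ))
    (he : ∀ i j, (∑ l, e i l * e j l) = if i = j then (1 : ℝ) else 0)
    (hAe : ∀ i, A.mulVec (e i) = κ i • e i) :
    A = ∑ k, κ k • Matrix.vecMulVec (e k) (e k) := by
  apply ext_of_mulVec_eq e he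
  intro k
  rw [hAe k, S_mulVec κ e he]

lemma B_expand (B : Matrix (Fin n) (Fin n) ℝ) (e : Fin n → (Fin n → ℝ))
    (he : ∀ i j, (∑ l, e i l * e j l) = if i = j then (1 : ℝ) else 0) :
    B = ∑ i, ∑ j, ((B *ᵥ e j) ⬝ᵥ e i) • Matrix.vecMulVec (e i) (e j) := by
  apply ext_of_mulVec_eq e he
  intro k
  rw [sum_mulVec]
  have : ∀ i, (∑ j, ((B *ᵥ e j) ⬝ᵥ e i) • Matrix.vecMulVec (e i) (e j)) *ᵥ e k
      = ((B *ᵥ e k) ⬝ᵥ e i) • e i := by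
    intro i
    rw [sum_mulVec]
    have : ∀ j, (((B *ᵥ e j) ⬝ᵥ e i) • Matrix.vecMulVec (e i) (e j)) *ᵥ e k
        = (((B *ᵥ e j) ⬝ᵥ e i) * if j = k then (1:ℝ) else 0) • e i := by
      intro j
      rw [Matrix.smul_mulVec, vmv_mulVec,
        show (e j ⬝ᵥ e k) = if j = k then (1:ℝ) else 0 from he j k, smul_smul]
    simp_rw [this]
    rw [Finset.sum_eq_single k]
    · simp
    · intro b _ hb; simp [hb]
    · simp
  simp_rw [this]
  conv_lhs => rw [← onb_expand e he (B *ᵥ e k)]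

end EigAux

namespace EigAux

variable {n : ℕ}

lemma vmv_expand (a b : ℝ) (u w : Fin n → ℝ) :
    Matrix.vecMulVec (a • u + b • w) (a • u + b • w)
      = (a * a) • Matrix.vecMulVec u u + (a * b) • Matrix.vecMulVec u w
        + (a * b) • Matrix.vecMulVec w u + (b * b) • Matrix.vecMulVec w w := by
  ext m l
  simp only [Matrix.vecMulVec_apply, Matrix.add_apply, Matrix.smul_apply, Pi.add_apply,
    Pi.smul_apply, smul_eq_mul]
  ring

lemma partial_symm (Γ : Set (Fin n → ℝ)) (hΓopen : IsOpen Γ)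
    (f : (Fin n → ℝ) → ℝ)
    (hfsymm : ∀ (π : Equiv.Perm (Fin n)) (κ : Fin n → ℝ), κ ∈ Γ → f (κ ∘ π) = f κ)
    (κ : Fin n → ℝ) (hκ : κ ∈ Γ) (hdf : DifferentiableAt ℝ f κ)
    (i j : Fin n) (hij : κ i = κ j) :
    fderiv ℝ f κ (Pi.single i 1) = fderiv ℝ f κ (Pi.single j 1) := by
  rcases eq_or_ne i j with rfl | hne
  · rfl
  set π : Equiv.Perm (Fin n) := Equiv.swap i j with hπ
  set P : (Fin n → ℝ) →L[ℝ] (Fin n → ℝ) :=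
    LinearMap.toContinuousLinearMap (LinearMap.funLeft ℝ ℝ π) with hP
  have hPapp : ∀ x : Fin n → ℝ, P x = x ∘ π := fun x => rfl
  have hκπ : κ ∘ π = κ := by
    funext l
    rcases eq_or_ne l i with rfl | hli
    · simp [hπ, Equiv.swap_apply_left, Function.comp, hij]
    rcases eq_or_ne l j with rfl | hlj
    · simp [hπ, Equiv.swap_apply_right, Function.comp, hij]
    · simp [hπ, Function.comp, Equiv.swap_apply_of_ne_of_ne hli hlj]
  have hgf : (fun x => f (P x)) =ᶠ[nhds κ] f := by
    filter_upwards [hΓopen.mem_nhds hκ] with x hx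
    rw [hPapp]
    exact hfsymm π x hx
  have h1 : fderiv ℝ (fun x => f (P x)) κ = fderiv ℝ f κ := hgf.fderiv_eq
  have h2 : fderiv ℝ (f ∘ P) κ = (fderiv ℝ f (P κ)).comp (fderiv ℝ P κ) := by
    apply fderiv_comp
    · rw [hPapp, hκπ]; exact hdf
    · exact P.differentiableAt
  rw [P.fderiv] at h2
  have hPκ : P κ = κ := by rw [hPapp, hκπ]
  rw [hPκ] at h2
  have key : ∀ h : Fin n → ℝ, fderiv ℝ f κ h = fderiv ℝ f κ (P h) := by
    intro h
    conv_lhs => rw [← h1]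
    rw [show (fun x => f (P x)) = f ∘ P from rfl, h2]
    rfl
  have hsingle : P (Pi.single i 1) = Pi.single j 1 := by
    rw [hPapp]
    funext l
    rcases eq_or_ne l i with rfl | hli
    · simp [hπ, Equiv.swap_apply_left, Function.comp, Pi.single_apply, hne.symm]
    rcases eq_or_ne l j with rfl | hlj
    · simp [hπ, Equiv.swap_apply_right, Function.comp, Pi.single_apply, hne]
    · simp [hπ, Function.comp, Equiv.swap_apply_of_ne_of_ne hli hlj,
        Pi.single_apply, hli, hlj]
  rw [key (Pi.single i 1), hsingle]

end EigAux

section Main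

open EigAux

set_option maxHeartbeats 1000000 in
/-- First derivative relation: if the smooth function `F` on matrices restricts to the
smooth symmetric function `f` of the eigenvalues on symmetric matrices with eigenvalues
in `Γ`, then at a symmetric matrix `A ∈ Ω` with eigenvalues `κ ∈ Γ` and orthonormal
eigenbasis `e`, for any symmetric `B`:
`DF(A)[B] = ∑ i, (∂f/∂κᵢ)(κ) * ⟨B eᵢ, eᵢ⟩`. -/
theorem fderiv_of_eigenvalue_function {n : ℕ}
    (Γ : Set (Fin n → ℝ)) (hΓopen : IsOpen Γ)
    (hΓsymm : ∀ (π : Equiv.Perm (Fin n)) (κ : Fin n → ℝ), κ ∈ Γ → (κ ∘ π) ∈ Γ)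
    (f : (Fin n → ℝ) → ℝ) (hf : ContDiffOn ℝ (⊤ : ℕ∞) f Γ)
    (hfsymm : ∀ (π : Equiv.Perm (Fin n)) (κ : Fin n → ℝ), κ ∈ Γ → f (κ ∘ π) = f κ)
    (Ω : Set (Matrix (Fin n) (Fin n) ℝ)) (hΩopen : IsOpen Ω)
    (F : Matrix (Fin n) (Fin n) ℝ → ℝ) (hF : ContDiffOn ℝ (⊤ : ℕ∞) F Ω)
    (hFf : ∀ A ∈ Ω, A.IsSymm →
      ∀ (κ : Fin n → ℝ) (e : Fin n → (Fin n → ℝ)),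
        κ ∈ Γ →
        (∀ i j, (∑ l, e i l * e j l) = if i = j then (1 : ℝ) else 0) →
        (∀ i, A.mulVec (e i) = κ i • e i) →
        F A = f κ)
    -- the data at the point of interest:
    (A : Matrix (Fin n) (Fin n) ℝ) (hA : A ∈ Ω) (hAsymm : A.IsSymm)
    (κ : Fin n → ℝ) (hκ : κ ∈ Γ)
    (e : Fin n → (Fin n → ℝ))
    (he : ∀ i j, (∑ l, e i l * e j l) = if i = j then (1 : ℝ) else 0)
    (hAe : ∀ i, A.mulVec (e i) = κ i • e i)
    (B : Matrix (Fin n) (Fin n) ℝ) (hB : B.IsSymm) :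
    fderiv ℝ F A B =
      ∑ i, fderiv ℝ f κ (Pi.single i 1) * (∑ l, B.mulVec (e i) l * e i l) := by
  classical
  have hdF : DifferentiableAt ℝ F A :=
    (hF.contDiffAt (hΩopen.mem_nhds hA)).differentiableAt (by simp)
  have hdf : DifferentiableAt ℝ f κ :=
    (hf.contDiffAt (hΓopen.mem_nhds hκ)).differentiableAt (by simp)
  set D : Matrix (Fin n) (Fin n) ℝ →L[ℝ] ℝ := fderiv ℝ F A with hD
  set g : Fin n → ℝ := fun i => fderiv ℝ f κ (Pi.single i 1) with hg
  set M : Fin n → Fin n → Matrix (Fin n) (Fin n) ℝ :=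
    fun a b => Matrix.vecMulVec (e a) (e b) with hM
  -- Step 1: D on diagonal directions
  have H1 : ∀ h : Fin n → ℝ, fderiv ℝ f κ h = D (∑ k, h k • M k k) := by
    set T : (Fin n → ℝ) →L[ℝ] Matrix (Fin n) (Fin n) ℝ :=
      LinearMap.toContinuousLinearMap
        { toFun := fun μ => ∑ k, μ k • M k k
          map_add' := by
            intro x y
            simp only [Pi.add_apply, add_smul]
            rw [Finset.sum_add_distrib]
          map_smul' := by
            intro c x
            simp only [Pi.smul_apply, smul_eq_mul, RingHom.id_apply, ← smul_smul]
            rw [Finset.smul_sum] } with hT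
    have hTapp : ∀ μ, T μ = ∑ k, μ k • M k k := fun μ => rfl
    have hTκ : T κ = A := by rw [hTapp]; exact (A_eq_S A κ e he hAe).symm
    have hTev : (fun μ => F (T μ)) =ᶠ[nhds κ] f := by
      have hΩnb : T ⁻¹' Ω ∈ nhds κ := by
        apply T.continuous.continuousAt.preimage_mem_nhds
        rw [hTκ]
        exact hΩopen.mem_nhds hA
      filter_upwards [hΓopen.mem_nhds hκ, hΩnb] with μ hμΓ hμΩ
      rw [hTapp]
      exact hFf _ hμΩ (S_isSymm μ e) μ e hμΓ he (S_mulVec μ e he)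
    intro h
    have h1 : fderiv ℝ (fun μ => F (T μ)) κ = fderiv ℝ f κ := hTev.fderiv_eq
    have h2 : fderiv ℝ (F ∘ T) κ = (fderiv ℝ F (T κ)).comp (fderiv ℝ T κ) :=
      fderiv_comp κ (by rw [hTκ]; exact hdF) T.differentiableAt
    rw [T.fderiv, hTκ] at h2
    have : fderiv ℝ f κ h = ((fderiv ℝ F A).comp T) h := by
      rw [← h2, ← h1]; rfl
    rw [this]
    rfl
  have H1' : ∀ i, D (M i i) = g i := by
    intro i
    show D (M i i) = fderiv ℝ f κ (Pi.single i 1)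
    rw [H1 (Pi.single i 1)]
    congr 1
    rw [Finset.sum_eq_single i]
    · simp
    · intro b _ hb; simp [Pi.single_apply, hb]
    · simp
  -- Step 2: off-diagonal
  have hdp : ∀ a b, e a ⬝ᵥ e b = (if a = b then (1:ℝ) else 0) := he
  have H2 : ∀ i j, i ≠ j → D (M i j + M j i) = 0 := by
    intro i j hne
    set C : Matrix (Fin n) (Fin n) ℝ := M i j + M j i with hCdef
    have hCsymm : Cᵀ = C := by
      rw [hCdef, Matrix.transpose_add, hM]
      rw [vmv_transpose, vmv_transpose]
      exact add_comm _ _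
    have hCe : ∀ x, C *ᵥ e x
        = (if j = x then (1:ℝ) else 0) • e i + (if i = x then (1:ℝ) else 0) • e j := by
      intro x
      rw [hCdef, Matrix.add_mulVec, hM]
      rw [vmv_mulVec, vmv_mulVec, hdp, hdp]
    rcases eq_or_ne (κ i) (κ j) with hκij | hκij
    · -- equal eigenvalues: straight-line curve splitting the eigenvalue
      set r : ℝ := (Real.sqrt 2)⁻¹ with hrdef
      have hrr : r * r = 1/2 := by
        rw [hrdef, ← mul_inv, Real.mul_self_sqrt (by norm_num : (0:ℝ) ≤ 2)]
        norm_num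
      set e' : Fin n → (Fin n → ℝ) := fun k =>
        if k = i then r • (e i + e j) else if k = j then r • (e i - e j) else e k with he'def
      have he'i : e' i = r • e i + r • e j := by
        rw [he'def]; simp [smul_add]
      have he'j : e' j = r • e i + (-r) • e j := by
        rw [he'def]; simp [hne.symm, smul_sub, sub_eq_add_neg]
      have he'k : ∀ k, k ≠ i → k ≠ j → e' k = e k := by
        intro k h1 h2; rw [he'def]; simp [h1, h2]
      set d : Fin n → ℝ := Pi.single i 1 - Pi.single j 1 with hddef
      have hdi : d i = 1 := by simp [hddef, Pi.single_apply, hne]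
      have hdj : d j = -1 := by simp [hddef, Pi.single_apply, hne.symm]
      have hdk : ∀ k, k ≠ i → k ≠ j → d k = 0 := by
        intro k h1 h2; simp [hddef, Pi.single_apply, h1, h2]
      -- orthonormality of e'
      have hmix : ∀ (x y : ℝ) (a : Fin n) (u : Fin n → ℝ),
          (x • e a + y • u) ⬝ᵥ (x • e a + y • u)
            = x * x * (e a ⬝ᵥ e a) + x * y * (e a ⬝ᵥ u) + y * x * (u ⬝ᵥ e a)
              + y * y * (u ⬝ᵥ u) := by
        intro x y a u
        simp only [dotProduct_add, add_dotProduct, smul_dotProduct,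
          dotProduct_smul, smul_eq_mul]
        ring
      have hmix2 : ∀ (x y x' y' : ℝ) (a b : Fin n),
          (x • e a + y • e b) ⬝ᵥ (x' • e a + y' • e b)
            = x * x' * (e a ⬝ᵥ e a) + x * y' * (e a ⬝ᵥ e b) + y * x' * (e b ⬝ᵥ e a)
              + y * y' * (e b ⬝ᵥ e b) := by
        intro x y x' y' a b
        simp only [dotProduct_add, add_dotProduct, smul_dotProduct,
          dotProduct_smul, smul_eq_mul]
        ring
      have hmix3 : ∀ (x y : ℝ) (a b c : Fin n),
          (x • e a + y • e b) ⬝ᵥ e c = x * (e a ⬝ᵥ e c) + y * (e b ⬝ᵥ e c) := by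
        intro x y a b c
        simp only [add_dotProduct, smul_dotProduct, smul_eq_mul]
      have hmix4 : ∀ (x y : ℝ) (a b c : Fin n),
          e c ⬝ᵥ (x • e a + y • e b) = x * (e c ⬝ᵥ e a) + y * (e c ⬝ᵥ e b) := by
        intro x y a b c
        simp only [dotProduct_add, dotProduct_smul, smul_eq_mul]
      have he'on : ∀ a b, (∑ l, e' a l * e' b l) = if a = b then (1:ℝ) else 0 := by
        intro a b
        show e' a ⬝ᵥ e' b = _
        by_cases hai : a = i
        · by_cases hbi : b = i
          · rw [hai, hbi, he'i, hmix2, hdp, hdp, hdp, hdp]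
            simp only [eq_self_iff_true, if_true, if_pos rfl, if_neg hne, if_neg hne.symm]
            linear_combination 2 * hrr
          by_cases hbj : b = j
          · rw [hai, hbj, he'i, he'j, hmix2, hdp, hdp, hdp, hdp]
            simp only [eq_self_iff_true, if_true, if_pos rfl, if_neg hne, if_neg hne.symm]
            ring
          · have h1 : ¬ (i = b) := fun h => hbi h.symm
            have h2 : ¬ (j = b) := fun h => hbj h.symm
            rw [hai, he'i, he'k b hbi hbj, hmix3, hdp, hdp]
            simp [h1, h2]
        by_cases haj : a = j
        · by_cases hbi : b = i
          · rw [haj, hbi, he'j, he'i, hmix2, hdp, hdp, hdp, hdp]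
            simp only [eq_self_iff_true, if_true, if_pos rfl, if_neg hne, if_neg hne.symm]
            ring
          by_cases hbj : b = j
          · rw [haj, hbj, he'j, hmix2, hdp, hdp, hdp, hdp]
            simp only [eq_self_iff_true, if_true, if_pos rfl, if_neg hne, if_neg hne.symm]
            linear_combination 2 * hrr
          · have h1 : ¬ (i = b) := fun h => hbi h.symm
            have h2 : ¬ (j = b) := fun h => hbj h.symm
            rw [haj, he'j, he'k b hbi hbj, hmix3, hdp, hdp]
            simp [h1, h2]
        · by_cases hbi : b = i
          · rw [hbi, he'k a hai haj, he'i, hmix4, hdp, hdp]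
            simp [hai, haj, (show ¬ (a = i) from hai), (show ¬ (a = j) from haj)]
          by_cases hbj : b = j
          · rw [hbj, he'k a hai haj, he'j, hmix4, hdp, hdp]
            simp [hai, haj]
          · rw [he'k a hai haj, he'k b hbi hbj, hdp]
      -- eigen equations for the curve
      have hΨe : ∀ t : ℝ, ∀ l, (A + t • C) *ᵥ e' l = (κ + t • d) l • e' l := by
        intro t l
        have hκtd : (κ + t • d) l = κ l + t * d l := by simp
        rw [Matrix.add_mulVec, Matrix.smul_mulVec, hκtd]
        rcases eq_or_ne l i with rfl | hli
        · rw [he'i, hdi]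
          rw [Matrix.mulVec_add, Matrix.mulVec_add, Matrix.mulVec_smul, Matrix.mulVec_smul,
            Matrix.mulVec_smul, Matrix.mulVec_smul, hAe, hAe, hCe, hCe]
          simp only [if_pos rfl, if_neg hne, if_neg hne.symm, if_true]
          rw [hκij]
          module
        rcases eq_or_ne l j with rfl | hlj
        · rw [he'j, hdj]
          rw [Matrix.mulVec_add, Matrix.mulVec_add, Matrix.mulVec_smul, Matrix.mulVec_smul,
            Matrix.mulVec_smul, Matrix.mulVec_smul, hAe, hAe, hCe, hCe]
          simp only [if_pos rfl, if_neg hne, if_neg hne.symm, if_true]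
          rw [hκij]
          module
        · rw [he'k l hli hlj, hdk l hli hlj, hAe, hCe]
          simp only [if_neg (Ne.symm hlj), if_neg (Ne.symm hli)]
          module
      -- symmetry of the curve
      have hΨsymm : ∀ t : ℝ, (A + t • C).IsSymm := by
        intro t
        unfold Matrix.IsSymm
        rw [Matrix.transpose_add, Matrix.transpose_smul, hCsymm, hAsymm]
      -- eventual equality near 0
      have hΨcont : Continuous (fun t : ℝ => A + t • C) :=
        continuous_const.add (continuous_id.smul continuous_const)
      have hΩev : ∀ᶠ t in nhds (0:ℝ), A + t • C ∈ Ω := by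
        have : (fun t : ℝ => A + t • C) ⁻¹' Ω ∈ nhds (0:ℝ) := by
          apply hΨcont.continuousAt.preimage_mem_nhds
          simpa using hΩopen.mem_nhds hA
        filter_upwards [this] with t ht using ht
      have hκcont : Continuous (fun t : ℝ => κ + t • d) :=
        continuous_const.add (continuous_id.smul continuous_const)
      have hΓev : ∀ᶠ t in nhds (0:ℝ), κ + t • d ∈ Γ := by
        have : (fun t : ℝ => κ + t • d) ⁻¹' Γ ∈ nhds (0:ℝ) := by
          apply hκcont.continuousAt.preimage_mem_nhds
          simpa using hΓopen.mem_nhds hκ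
        filter_upwards [this] with t ht using ht
      have hev : (fun t : ℝ => F (A + t • C)) =ᶠ[nhds 0] (fun t => f (κ + t • d)) := by
        filter_upwards [hΩev, hΓev] with t htΩ htΓ
        exact hFf _ htΩ (hΨsymm t) (κ + t • d) e' htΓ he'on (hΨe t)
      -- derivatives
      have hΨd : HasDerivAt (fun t : ℝ => A + t • C) C 0 := by
        have := ((hasDerivAt_id (0:ℝ)).smul_const C).const_add A
        simp only [id, one_smul] at this
        exact this
      have hκd : HasDerivAt (fun t : ℝ => κ + t • d) d 0 := by
        simpa using ((hasDerivAt_id (0:ℝ)).smul_const d).const_add κ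
      have hL : HasDerivAt (fun t : ℝ => F (A + t • C)) (D C) 0 :=
        hdF.hasFDerivAt.comp_hasDerivAt_of_eq 0 hΨd (by simp)
      have hR : HasDerivAt (fun t : ℝ => f (κ + t • d)) (fderiv ℝ f κ d) 0 :=
        hdf.hasFDerivAt.comp_hasDerivAt_of_eq 0 hκd (by simp)
      have hL' : HasDerivAt (fun t : ℝ => f (κ + t • d)) (D C) 0 :=
        hL.congr_of_eventuallyEq hev.symm
      have hDC : D C = fderiv ℝ f κ d := hL'.unique hR
      rw [hDC, hddef, map_sub]
      have := partial_symm Γ hΓopen f hfsymm κ hκ hdf i j hκij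
      rw [this]
      ring
    · -- distinct eigenvalues: rotation curve
      set v : ℝ → Fin n → (Fin n → ℝ) := fun t k =>
        if k = i then Real.cos t • e i + Real.sin t • e j
        else if k = j then Real.cos t • e j + (- Real.sin t) • e i
        else e k with hvdef
      have hvi : ∀ t, v t i = Real.cos t • e i + Real.sin t • e j := by
        intro t; rw [hvdef]; simp
      have hvj : ∀ t, v t j = Real.cos t • e j + (- Real.sin t) • e i := by
        intro t; rw [hvdef]; simp [hne.symm]
      have hvk : ∀ t k, k ≠ i → k ≠ j → v t k = e k := by
        intro t k h1 h2; rw [hvdef]; simp [h1, h2]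
      have hv0 : ∀ k, v 0 k = e k := by
        intro k
        by_cases h1 : k = i
        · rw [h1, hvi]; simp
        by_cases h2 : k = j
        · rw [h2, hvj]; simp
        · exact hvk 0 k h1 h2
      have hmix2 : ∀ (x y x' y' : ℝ) (a b : Fin n),
          (x • e a + y • e b) ⬝ᵥ (x' • e a + y' • e b)
            = x * x' * (e a ⬝ᵥ e a) + x * y' * (e a ⬝ᵥ e b) + y * x' * (e b ⬝ᵥ e a)
              + y * y' * (e b ⬝ᵥ e b) := by
        intro x y x' y' a b
        simp only [dotProduct_add, add_dotProduct, smul_dotProduct,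
          dotProduct_smul, smul_eq_mul]
        ring
      have hmix3 : ∀ (x y : ℝ) (a b c : Fin n),
          (x • e a + y • e b) ⬝ᵥ e c = x * (e a ⬝ᵥ e c) + y * (e b ⬝ᵥ e c) := by
        intro x y a b c
        simp only [add_dotProduct, smul_dotProduct, smul_eq_mul]
      have hmix4 : ∀ (x y : ℝ) (a b c : Fin n),
          e c ⬝ᵥ (x • e a + y • e b) = x * (e c ⬝ᵥ e a) + y * (e c ⬝ᵥ e b) := by
        intro x y a b c
        simp only [dotProduct_add, dotProduct_smul, smul_eq_mul]
      have hvon : ∀ t a b, (∑ l, v t a l * v t b l) = if a = b then (1:ℝ) else 0 := by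
        intro t a b
        have pyth := Real.sin_sq_add_cos_sq t
        show v t a ⬝ᵥ v t b = _
        by_cases hai : a = i
        · by_cases hbi : b = i
          · rw [hai, hbi, hvi, hmix2, hdp, hdp, hdp, hdp]
            simp only [eq_self_iff_true, if_true, if_pos rfl, if_neg hne, if_neg hne.symm]
            linear_combination pyth
          by_cases hbj : b = j
          · rw [hai, hbj, hvi, hvj]
            have := hmix2 (Real.cos t) (Real.sin t) (- Real.sin t) (Real.cos t) i j
            rw [show Real.cos t • e j + (- Real.sin t) • e i
                = (- Real.sin t) • e i + Real.cos t • e j by module] at *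
            rw [this, hdp, hdp, hdp, hdp]
            simp only [eq_self_iff_true, if_true, if_pos rfl, if_neg hne, if_neg hne.symm]
            ring
          · have h1 : ¬ (i = b) := fun h => hbi h.symm
            have h2 : ¬ (j = b) := fun h => hbj h.symm
            rw [hai, hvi, hvk t b hbi hbj, hmix3, hdp, hdp]
            simp [h1, h2]
        by_cases haj : a = j
        · by_cases hbi : b = i
          · rw [haj, hbi, hvj, hvi]
            have := hmix2 (- Real.sin t) (Real.cos t) (Real.cos t) (Real.sin t) i j
            rw [show Real.cos t • e j + (- Real.sin t) • e i
                = (- Real.sin t) • e i + Real.cos t • e j by module] at *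
            rw [this, hdp, hdp, hdp, hdp]
            simp only [eq_self_iff_true, if_true, if_pos rfl, if_neg hne, if_neg hne.symm]
            ring
          by_cases hbj : b = j
          · rw [haj, hbj, hvj, hmix2, hdp, hdp, hdp, hdp]
            simp only [eq_self_iff_true, if_true, if_pos rfl, if_neg hne, if_neg hne.symm]
            linear_combination pyth
          · have h1 : ¬ (i = b) := fun h => hbi h.symm
            have h2 : ¬ (j = b) := fun h => hbj h.symm
            rw [haj, hvj, hvk t b hbi hbj, hmix3, hdp, hdp]
            simp [h1, h2]
        · by_cases hbi : b = i
          · rw [hbi, hvk t a hai haj, hvi, hmix4, hdp, hdp]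
            simp [hai, haj]
          by_cases hbj : b = j
          · rw [hbj, hvk t a hai haj, hvj, hmix4, hdp, hdp]
            simp [hai, haj]
          · rw [hvk t a hai haj, hvk t b hbi hbj, hdp]
      set γ : ℝ → Matrix (Fin n) (Fin n) ℝ :=
        fun t => ∑ k, κ k • Matrix.vecMulVec (v t k) (v t k) with hγdef
      have hγ0 : γ 0 = A := by
        rw [hγdef]
        simp only [hv0]
        exact (A_eq_S A κ e he hAe).symm
      have hγsymm : ∀ t, (γ t).IsSymm := fun t => S_isSymm κ (v t)
      have hγeig : ∀ t l, (γ t) *ᵥ (v t l) = κ l • v t l := fun t => S_mulVec κ (v t) (hvon t)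
      have hγcont : Continuous γ := by
        rw [hγdef]
        apply continuous_finset_sum
        intro k _
        refine Continuous.const_smul (g := fun a => Matrix.vecMulVec (v a k) (v a k)) ?_ (κ k)
        apply Continuous.matrix_vecMulVec <;>
        · by_cases h1 : k = i
          · simp only [h1, hvi]
            exact (Real.continuous_cos.smul continuous_const).add
              (Real.continuous_sin.smul continuous_const)
          by_cases h2 : k = j
          · simp only [h2, hvj]
            exact (Real.continuous_cos.smul continuous_const).add
              ((Real.continuous_sin.neg).smul continuous_const)
          · simp only [hvk _ k h1 h2]
            exact continuous_const
      have hev : (fun t : ℝ => F (γ t)) =ᶠ[nhds 0] (fun _ => f κ) := by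
        have hΩev : ∀ᶠ t in nhds (0:ℝ), γ t ∈ Ω := by
          have : γ ⁻¹' Ω ∈ nhds (0:ℝ) := by
            apply hγcont.continuousAt.preimage_mem_nhds
            rw [hγ0]
            exact hΩopen.mem_nhds hA
          filter_upwards [this] with t ht using ht
        filter_upwards [hΩev] with t htΩ
        exact hFf _ htΩ (hγsymm t) κ (v t) hκ (hvon t) (hγeig t)
      -- the derivative of γ at 0
      have hγeq : ∀ t, γ t = A + ((κ i - κ j) * (Real.sin t * Real.cos t)) • C
          + ((κ j - κ i) * Real.sin t ^ 2) • (M i i - M j j) := by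
        intro t
        have pyth := Real.sin_sq_add_cos_sq t
        have hsplit : γ t = (∑ k, κ k • Matrix.vecMulVec (e k) (e k))
            + ∑ k, κ k • (Matrix.vecMulVec (v t k) (v t k) - Matrix.vecMulVec (e k) (e k)) := by
          rw [hγdef, ← Finset.sum_add_distrib]
          apply Finset.sum_congr rfl
          intro k _
          rw [← smul_add]
          congr 1
          abel
        have hzero : ∀ k ∈ Finset.univ, k ∉ ({i, j} : Finset (Fin n)) →
            κ k • (Matrix.vecMulVec (v t k) (v t k) - Matrix.vecMulVec (e k) (e k)) = 0 := by
          intro k _ hk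
          simp only [Finset.mem_insert, Finset.mem_singleton, not_or] at hk
          rw [hvk t k hk.1 hk.2]
          simp
        have hsum2 : ∑ k, κ k • (Matrix.vecMulVec (v t k) (v t k) - Matrix.vecMulVec (e k) (e k))
            = κ i • (Matrix.vecMulVec (v t i) (v t i) - Matrix.vecMulVec (e i) (e i))
              + κ j • (Matrix.vecMulVec (v t j) (v t j) - Matrix.vecMulVec (e j) (e j)) := by
          rw [← Finset.sum_subset (Finset.subset_univ ({i, j} : Finset (Fin n))) hzero]
          rw [Finset.sum_pair hne]
        rw [hsplit, hsum2, ← A_eq_S A κ e he hAe, hvi, hvj, vmv_expand, vmv_expand,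
          hCdef, hM]
        match_scalars <;>
          first
            | ring1
            | linear_combination (κ i) * pyth
            | linear_combination (κ j) * pyth
      have h1 : HasDerivAt (fun t : ℝ => Real.sin t * Real.cos t) 1 0 := by
        have := (Real.hasDerivAt_sin 0).mul (Real.hasDerivAt_cos 0)
        simp at this
        exact this
      have h2 : HasDerivAt (fun t : ℝ => Real.sin t ^ 2) 0 0 := by
        have := (Real.hasDerivAt_sin 0).pow 2
        simp at this
        exact this
      have hγd : HasDerivAt γ ((κ i - κ j) • C) 0 := by
        have := (((h1.const_mul (κ i - κ j)).smul_const C).add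
          ((h2.const_mul (κ j - κ i)).smul_const (M i i - M j j))).const_add A
        have heq : γ = fun t => A + (((κ i - κ j) * (Real.sin t * Real.cos t)) • C
            + ((κ j - κ i) * Real.sin t ^ 2) • (M i i - M j j)) := by
          funext t
          rw [hγeq t]
          abel
        rw [heq]
        refine this.congr_deriv ?_
        simp
      have hL : HasDerivAt (fun t : ℝ => F (γ t)) (D ((κ i - κ j) • C)) 0 :=
        hdF.hasFDerivAt.comp_hasDerivAt_of_eq 0 hγd hγ0.symm
      have hconst : HasDerivAt (fun _ : ℝ => f κ) (D ((κ i - κ j) • C)) 0 :=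
        hL.congr_of_eventuallyEq hev.symm
      have h0 : D ((κ i - κ j) • C) = 0 := hconst.unique (hasDerivAt_const 0 _)
      rw [_root_.map_smul, smul_eq_mul] at h0
      rcases mul_eq_zero.mp h0 with h | h
      · exact absurd (sub_eq_zero.mp h) hκij
      · exact h
  -- Final assembly
  set b : Fin n → Fin n → ℝ := fun i j => (B *ᵥ e j) ⬝ᵥ e i with hbdef
  have hbsymm : ∀ i j, b i j = b j i := by
    intro i j
    show (B *ᵥ e j) ⬝ᵥ e i = (B *ᵥ e i) ⬝ᵥ e j
    rw [dotProduct_comm, Matrix.dotProduct_mulVec]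
    congr 1
    rw [← Matrix.mulVec_transpose, hB]
  have hDB : D B = ∑ i, ∑ j, b i j * D (M i j) := by
    conv_lhs => rw [B_expand B e he]
    rw [map_sum]
    apply Finset.sum_congr rfl
    intro i _
    rw [map_sum]
    apply Finset.sum_congr rfl
    intro j _
    rw [D.map_smul, smul_eq_mul]
  have hswap : (∑ i, ∑ j, b i j * D (M i j)) = ∑ i, ∑ j, b i j * D (M j i) := by
    rw [Finset.sum_comm]
    apply Finset.sum_congr rfl; intro x _
    apply Finset.sum_congr rfl; intro y _
    rw [hbsymm]
  have hkey : ∀ i, (∑ j, b i j * (D (M i j) + D (M j i))) = b i i * (2 * g i) := by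
    intro i
    rw [Finset.sum_eq_single i]
    · rw [H1' i]; ring
    · intro j _ hji
      rw [← map_add, H2 i j (Ne.symm hji), mul_zero]
    · intro h; exact absurd (Finset.mem_univ i) h
  have h2DB : 2 * D B = ∑ i, b i i * (2 * g i) := by
    calc 2 * D B = (∑ i, ∑ j, b i j * D (M i j)) + (∑ i, ∑ j, b i j * D (M j i)) := by
          rw [← hDB, ← hswap, ← hDB]; ring
      _ = ∑ i, ∑ j, (b i j * D (M i j) + b i j * D (M j i)) := by
          rw [← Finset.sum_add_distrib]
          exact Finset.sum_congr rfl fun i _ => (Finset.sum_add_distrib).symm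
      _ = ∑ i, ∑ j, b i j * (D (M i j) + D (M j i)) := by
          exact Finset.sum_congr rfl fun i _ => Finset.sum_congr rfl fun j _ => by ring
      _ = ∑ i, b i i * (2 * g i) := Finset.sum_congr rfl fun i _ => hkey i
  have hfin : D B = ∑ i, g i * b i i := by
    have h2 : 2 * D B = 2 * ∑ i, g i * b i i := by
      rw [h2DB, Finset.mul_sum]
      exact Finset.sum_congr rfl fun i _ => by ring
    linarith
  show D B = _
  rw [hfin]
  exact Finset.sum_congr rfl fun i _ => rfl

end Main
end

section
/- For every 1 ≤ k ≤ n, the Gårding cone Γ_k = {κ ∈ ℝⁿ : s_j(κ) > 0 for all 1 ≤ j ≤ k} is a convex subset of ℝⁿ. -/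
/-!
If `Im zᵢ > 0` for all `i`, the roots `-zᵢ` of `∏ (X + zᵢ)` lie in the open lower half-plane, so by
Gauss–Lucas the roots of its `(n - k)`-th derivative do too; that derivative takes the value
`(n - k)! sₖ(z)` at `0`, hence `sₖ(z) ≠ 0`. Gårding's continuity argument upgrades this to
`sₖ(z) ≠ 0` whenever `Im z ∈ Γₖ`: the cone `Γₖ` is star-shaped about `𝟙 = (1, …, 1)`, and as `c`
moves in `Γₖ` the zeros of the degree-`k` polynomials `t ↦ sₖ(t c + w)` move continuously, so they
cannot enter the closed upper half-plane without crossing the real axis. The same argument applied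
to `t ↦ sₖ(t b + i a)` shows `sₖ(a + τ b) ≠ 0` for `a, b ∈ Γₖ` and `τ ≥ 0`, so `sₖ(a + b) > 0`:
`Γₖ` is closed under addition, and being a cone it is convex.
-/

/-- The `k`-th elementary symmetric polynomial of `x ∈ ℝⁿ`. -/
noncomputable def esymm (n k : ℕ) (x : Fin n → ℝ) : ℝ :=
  ∑ S ∈ Finset.powersetCard k (Finset.univ : Finset (Fin n)), ∏ i ∈ S, x i

/-- The Gårding cone `Γₖ = {κ ∈ ℝⁿ : sⱼ(κ) > 0 for all 1 ≤ j ≤ k}`. -/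
def gardingCone (n k : ℕ) : Set (Fin n → ℝ) :=
  {κ | ∀ j : ℕ, 1 ≤ j → j ≤ k → 0 < esymm n j κ}

open Polynomial Finset Topology Filter

section RootConfinement

theorem Polynomial.rootSet_iterate_derivative_subset {P : ℂ[X]} {U : Set ℂ} (hU : Convex ℝ U)
    (hP : P.rootSet ℂ ⊆ U) (m : ℕ) : (derivative^[m] P).rootSet ℂ ⊆ U := by
  induction m with
  | zero => simpa
  | succ m ih =>
    rw [Function.iterate_succ_apply']
    rcases lt_or_ge 0 (derivative^[m] P).degree with h | h
    · exact (rootSet_derivative_subset_convexHull_rootSet h).trans (hU.convexHull_subset_iff.2 ih)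
    · simp [derivative_of_natDegree_zero (natDegree_eq_zero_iff_degree_le_zero.2 h)]

theorem Polynomial.norm_leadingCoeff_mul_im_pow_le_norm_eval {p : ℂ[X]}
    (hp : ∀ r ∈ p.roots, r.im ≤ 0) {z : ℂ} (hz : 0 ≤ z.im) :
    ‖p.leadingCoeff‖ * z.im ^ p.natDegree ≤ ‖p.eval z‖ := by
  have hnorm (m : Multiset ℂ) : ‖m.prod‖ = (m.map (‖·‖)).prod :=
    map_multiset_prod (normHom : ℂ →*₀ ℝ) m
  conv_rhs => rw [← C_leadingCoeff_mul_prod_multiset_X_sub_C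
    (IsAlgClosed.card_roots_eq_natDegree (p := p))]
  rw [eval_mul, eval_C, norm_mul, eval_multiset_prod, ← IsAlgClosed.card_roots_eq_natDegree,
    hnorm, Multiset.map_map, Multiset.map_map]
  gcongr
  calc z.im ^ Multiset.card p.roots = (p.roots.map fun _ => z.im).prod := by simp
    _ ≤ _ := Multiset.prod_map_le_prod_map₀ _ _ (fun _ _ => hz) fun r hr => by
      simpa using (Complex.im_le_norm (z - r)).trans' (by simp; linarith [hp r hr])

variable {Y : Type*} [TopologicalSpace Y]

theorem Polynomial.continuous_coeff_of_continuous_eval {F : Type*} [Field F] [TopologicalSpace F]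
    [IsTopologicalRing F] [CharZero F] {p : Y → F[X]} {k : ℕ} (hdeg : ∀ y, (p y).natDegree ≤ k)
    (hcont : ∀ z, Continuous fun y => (p y).eval z) (j : ℕ) :
    Continuous fun y => (p y).coeff j := by
  have hinterp : ∀ y, p y = Lagrange.interpolate (range (k + 1)) (fun i : ℕ => (i : F))
      (fun i => (p y).eval (i : F)) := fun y =>
    Lagrange.eq_interpolate_of_eval_eq _ Nat.cast_injective.injOn
      (by simpa using degree_le_natDegree.trans_lt (by exact_mod_cast Nat.lt_succ_of_le (hdeg y)))
      fun _ _ => rfl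
  simp_rw [fun y => congrArg (coeff · j) (hinterp y), Lagrange.interpolate_apply, finsetSum_coeff,
    coeff_C_mul]
  exact continuous_finsetSum _ fun i _ => (hcont i).mul continuous_const

theorem Polynomial.continuous_eval_of_continuous_coeff {F : Type*} [CommSemiring F]
    [TopologicalSpace F] [IsTopologicalSemiring F] {p : Y → F[X]} {k : ℕ}
    (hdeg : ∀ y, (p y).natDegree ≤ k) (hcont : ∀ j, Continuous fun y => (p y).coeff j) :
    Continuous fun q : Y × F => (p q.1).eval q.2 := by
  simp_rw [fun q : Y × F => eval_eq_sum_range' (Nat.lt_succ_of_le (hdeg q.1)) q.2]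
  exact continuous_finsetSum _ fun j _ => ((hcont j).comp continuous_fst).mul (continuous_snd.pow j)

theorem Polynomial.continuous_cauchyBound {K : Type*} [NormedDivisionRing K] {p : Y → K[X]}
    {k : ℕ} (hdeg : ∀ y, (p y).degree = k) (hcont : ∀ j, Continuous fun y => (p y).coeff j) :
    Continuous fun y => cauchyBound (p y) := by
  have hnat : ∀ y, (p y).natDegree = k := fun y => natDegree_eq_of_degree_eq_some (hdeg y)
  simp only [cauchyBound, hnat, leadingCoeff]
  refine ((Continuous.finset_sup_apply fun j _ => (hcont j).nnnorm).div (hcont k).nnnorm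
    fun y => ?_).add continuous_const
  rw [nnnorm_ne_zero_iff, ← hnat y]
  exact leadingCoeff_ne_zero.2 (ne_zero_of_coe_le_degree (hdeg y).ge)

theorem Polynomial.isClosed_setOf_forall_eval_ne_zero {p : Y → ℂ[X]} {k : ℕ}
    (hdeg : ∀ y, (p y).degree = k) (hcont : ∀ z, Continuous fun y => (p y).eval z)
    (hreal : ∀ y (r : ℝ), (p y).eval (r : ℂ) ≠ 0) :
    IsClosed {y | ∀ z : ℂ, 0 ≤ z.im → (p y).eval z ≠ 0} := by
  have hnat : ∀ y, (p y).natDegree = k := fun y => natDegree_eq_of_degree_eq_some (hdeg y)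
  have hlc : ∀ y, (p y).coeff k ≠ 0 := fun y => by
    rw [← hnat y]
    exact leadingCoeff_ne_zero.2 (ne_zero_of_coe_le_degree (hdeg y).ge)
  -- Off the real axis the lower bound `‖lc‖ (Im z)ᵏ ≤ ‖p(z)‖` is equivalent, and it is closed.
  have : {y | ∀ z : ℂ, 0 ≤ z.im → (p y).eval z ≠ 0} =
      ⋂ z ∈ {z : ℂ | 0 < z.im}, {y | ‖(p y).coeff k‖ * z.im ^ k ≤ ‖(p y).eval z‖} := by
    ext y
    simp only [Set.mem_ofPred_eq, Set.mem_iInter]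
    constructor
    · intro hy z hz
      have hroots : ∀ r ∈ (p y).roots, r.im ≤ 0 := fun r hr =>
        (not_le.1 fun h => hy r h (isRoot_of_mem_roots hr)).le
      simpa [leadingCoeff, hnat y] using norm_leadingCoeff_mul_im_pow_le_norm_eval hroots hz.le
    · intro hy z hz
      rcases hz.eq_or_lt with hz | hz
      · have hzre : (z.re : ℂ) = z := Complex.ext (by simp) (by simp [← hz])
        exact hzre ▸ hreal y z.re
      · refine norm_ne_zero_iff.1 (lt_of_lt_of_le ?_ (hy z hz)).ne'
        exact mul_pos (norm_pos_iff.2 (hlc y)) (pow_pos hz k)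
  rw [this]
  have hcoeff := continuous_coeff_of_continuous_eval (fun y => (hnat y).le) hcont
  exact isClosed_biInter fun z _ =>
    isClosed_le ((hcoeff k).norm.mul continuous_const) (hcont z).norm

theorem Polynomial.isOpen_setOf_forall_eval_ne_zero {p : Y → ℂ[X]} {k : ℕ}
    (hdeg : ∀ y, (p y).degree = k) (hcont : ∀ z, Continuous fun y => (p y).eval z) :
    IsOpen {y | ∀ z : ℂ, 0 ≤ z.im → (p y).eval z ≠ 0} := by
  have hnat : ∀ y, (p y).natDegree ≤ k := fun y => (natDegree_eq_of_degree_eq_some (hdeg y)).le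
  have hcoeff := continuous_coeff_of_continuous_eval hnat hcont
  -- Near `y₀` all roots lie in a fixed ball (Cauchy bound), whose upper half `K` is compact.
  refine isOpen_iff_eventually.2 fun y₀ hy₀ => ?_
  set R : ℝ := cauchyBound (p y₀) + 1
  set K : Set ℂ := Metric.closedBall 0 R ∩ {z | 0 ≤ z.im}
  have hK : IsCompact K := (isCompact_closedBall 0 R).inter_right
    (isClosed_le continuous_const Complex.continuous_im)
  have hbound : ∀ᶠ y in 𝓝 y₀, (cauchyBound (p y) : ℝ) < R :=
    (NNReal.continuous_coe.comp (continuous_cauchyBound hdeg hcoeff)).continuousAt.eventually_lt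
      continuousAt_const (lt_add_one _)
  have hK_free : ∀ᶠ y in 𝓝 y₀, ∀ z ∈ K, (p y).eval z ≠ 0 :=
    hK.eventually_forall_of_forall_eventually fun z hz =>
      (continuous_eval_of_continuous_coeff hnat hcoeff).continuousAt.eventually_ne (hy₀ z hz.2)
  filter_upwards [hbound, hK_free] with y hyR hyK z hz hzero
  have hzR : ‖z‖ < R := (NNReal.coe_lt_coe.2
    (IsRoot.norm_lt_cauchyBound (ne_zero_of_coe_le_degree (hdeg y).ge) hzero)).trans hyR
  exact hyK z ⟨mem_closedBall_zero_iff.2 hzR.le, hz⟩ hzero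

theorem Polynomial.eval_ne_zero_of_im_nonneg_of_preconnectedSpace [PreconnectedSpace Y]
    {p : Y → ℂ[X]} {k : ℕ}
    (hdeg : ∀ y, (p y).degree = k) (hcont : ∀ z, Continuous fun y => (p y).eval z)
    (hreal : ∀ y (r : ℝ), (p y).eval (r : ℂ) ≠ 0) {y₀ : Y}
    (hy₀ : ∀ z : ℂ, 0 ≤ z.im → (p y₀).eval z ≠ 0) (y : Y) {z : ℂ} (hz : 0 ≤ z.im) :
    (p y).eval z ≠ 0 := by
  have := IsClopen.eq_univ ⟨isClosed_setOf_forall_eval_ne_zero hdeg hcont hreal,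
    isOpen_setOf_forall_eval_ne_zero hdeg hcont⟩ ⟨y₀, hy₀⟩
  have hy : y ∈ {y | ∀ z : ℂ, 0 ≤ z.im → (p y).eval z ≠ 0} := this ▸ Set.mem_univ y
  exact hy z hz

end RootConfinement

section esymmC

variable {n k : ℕ}

noncomputable def esymmC (k : ℕ) (z : Fin n → ℂ) : ℂ :=
  ∑ S ∈ powersetCard k univ, ∏ i ∈ S, z i

theorem esymmC_ofReal (x : Fin n → ℝ) : esymmC k (fun i => (x i : ℂ)) = esymm n k x := by
  simp [esymmC, esymm]

theorem esymmC_smul (c : ℂ) (z : Fin n → ℂ) : esymmC k (c • z) = c ^ k * esymmC k z := by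
  simp only [esymmC, mul_sum]
  refine sum_congr rfl fun S hS => ?_
  simp [prod_mul_distrib, (mem_powersetCard.1 hS).2]

theorem continuous_esymmC : Continuous (esymmC (n := n) k) := by
  unfold esymmC
  fun_prop

theorem esymmC_ne_zero_of_neg_mem_convex (hk : k ≤ n) {U : Set ℂ} (hU : Convex ℝ U)
    (h0 : (0 : ℂ) ∉ U) {z : Fin n → ℂ} (hz : ∀ i, -z i ∈ U) : esymmC k z ≠ 0 := by
  set P : ℂ[X] := ∏ i, (X + C (z i))
  have hcoeff : ∀ m ≤ n, P.coeff m = esymmC (n - m) z := fun m hm => by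
    simpa [esymmC] using prod_X_add_C_coeff univ z (by simpa using hm)
  have hroots : P.rootSet ℂ ⊆ U := by
    intro w hw
    obtain ⟨i, -, hi⟩ := prod_eq_zero_iff.1 (by simpa [P, eval_prod] using (mem_rootSet.1 hw).2)
    rw [add_eq_zero_iff_eq_neg.1 hi]
    exact hz i
  have hD : derivative^[n - k] P ≠ 0 := by
    intro h
    have := congrArg (coeff · k) h
    simp only [coeff_iterate_derivative, Nat.add_sub_cancel' hk, hcoeff n le_rfl] at this
    simp [esymmC, Nat.descFactorial_eq_zero_iff_lt] at this
    omega
  intro hzero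
  refine h0 (rootSet_iterate_derivative_subset hU hroots (n - k) (mem_rootSet.2 ⟨hD, ?_⟩))
  rw [coe_aeval_eq_eval, ← coeff_zero_eq_eval_zero, coeff_iterate_derivative, zero_add,
    hcoeff _ (Nat.sub_le n k), Nat.sub_sub_self hk, hzero, smul_zero]

theorem esymmC_ne_zero_of_forall_im_pos (hk : k ≤ n) {z : Fin n → ℂ}
    (hz : ∀ i, 0 < (z i).im) : esymmC k z ≠ 0 :=
  esymmC_ne_zero_of_neg_mem_convex hk (convex_halfSpace_im_lt 0) (by simp)
    fun i => by simpa using hz i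

noncomputable def lineEsymm (k : ℕ) (a w : Fin n → ℂ) : ℂ[X] :=
  ∑ S ∈ powersetCard k univ, ∏ i ∈ S, (C (a i) * X + C (w i))

theorem eval_lineEsymm (a w : Fin n → ℂ) (t : ℂ) :
    (lineEsymm k a w).eval t = esymmC k (fun i => t * a i + w i) := by
  simp only [lineEsymm, esymmC, eval_finsetSum, eval_prod, eval_add, eval_mul, eval_C, eval_X,
    mul_comm]

theorem degree_lineEsymm {a : Fin n → ℂ} (ha : esymmC k a ≠ 0) (w : Fin n → ℂ) :
    (lineEsymm k a w).degree = k := by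
  have hlin : ∀ i, (C (a i) * X + C (w i)).natDegree ≤ 1 := fun i => natDegree_linear_le
  refine degree_eq_of_le_of_coeff_ne_zero ?_ ?_
  · refine (degree_le_natDegree).trans (WithBot.coe_le_coe.2 ?_)
    refine natDegree_sum_le_of_forall_le _ _ fun S hS => (natDegree_prod_le _ _).trans ?_
    simpa [(mem_powersetCard.1 hS).2] using sum_le_sum fun i (_ : i ∈ S) => hlin i
  · convert ha using 1
    simp only [lineEsymm, finsetSum_coeff, esymmC]
    refine sum_congr rfl fun S hS => ?_
    simpa [(mem_powersetCard.1 hS).2] using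
      coeff_prod_of_natDegree_le S _ 1 fun i _ => hlin i

end esymmC

section GardingCone

variable {n k : ℕ}

theorem esymm_pos_of_mem_gardingCone {a : Fin n → ℝ} (ha : a ∈ gardingCone n k) {j : ℕ}
    (hj : j ≤ k) : 0 < esymm n j a := by
  rcases j.eq_zero_or_pos with rfl | hj0
  · simp [esymm]
  · exact ha j hj0 hj

theorem gardingCone_antitone : Antitone (gardingCone n) :=
  fun _ _ hjk _ ha i hi hij => ha i hi (hij.trans hjk)

theorem le_of_mem_gardingCone {a : Fin n → ℝ} (ha : a ∈ gardingCone n k) : k ≤ n := by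
  by_contra! h
  have := esymm_pos_of_mem_gardingCone ha le_rfl
  simp [esymm, powersetCard_eq_empty.2 (by simpa using h : #(univ : Finset (Fin n)) < k)] at this

theorem one_mem_gardingCone (hk : k ≤ n) : (1 : Fin n → ℝ) ∈ gardingCone n k := by
  intro j _ hj
  simpa [esymm] using Nat.choose_pos (hj.trans hk)

theorem esymm_smul (c : ℝ) (x : Fin n → ℝ) : esymm n k (c • x) = c ^ k * esymm n k x := by
  simp only [esymm, mul_sum]
  refine sum_congr rfl fun S hS => ?_
  simp [prod_mul_distrib, (mem_powersetCard.1 hS).2]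

theorem smul_mem_gardingCone {c : ℝ} (hc : 0 < c) {a : Fin n → ℝ} (ha : a ∈ gardingCone n k) :
    c • a ∈ gardingCone n k := fun j hj hjk => by
  rw [esymm_smul]
  exact mul_pos (pow_pos hc j) (ha j hj hjk)

theorem continuous_esymm : Continuous (esymm n k) := by
  unfold esymm
  fun_prop

theorem isOpen_gardingCone : IsOpen (gardingCone n k) := by
  have : gardingCone n k = ⋂ j ∈ Icc 1 k, {x | 0 < esymm n j x} := by
    ext; simp [gardingCone]
  rw [this]
  exact isOpen_biInter_finset fun j _ => isOpen_lt continuous_const continuous_esymm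

theorem esymm_add_smul_one_pos {a : Fin n → ℝ} (ha : a ∈ gardingCone n k) {T : ℝ} (hT : 0 ≤ T) :
    0 < esymm n k (a + T • 1) := by
  have hk := le_of_mem_gardingCone ha
  set P : ℝ[X] := ∏ i, (X + C (a i))
  have hcoeff : ∀ m ≤ n, P.coeff m = esymm n (n - m) a := fun m hm => by
    simpa [esymm] using prod_X_add_C_coeff univ a (by simpa using hm)
  have hdeg : P.natDegree = n := by
    simp [P, natDegree_prod_of_monic _ _ fun i _ => monic_X_add_C (a i)]
  have htaylor : taylor T P = ∏ i, (X + C (a i + T)) := by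
    simp [P, taylor_apply, Polynomial.prod_comp, add_assoc, add_comm (C T)]
  -- Taylor expansion: `sₖ(a + T𝟙) = ∑ₘ C(m + n - k, n - k) sₖ₋ₘ(a) Tᵐ`.
  have key : esymm n k (a + T • 1) = eval T (hasseDeriv (n - k) P) := by
    rw [← taylor_coeff, htaylor]
    have := prod_X_add_C_coeff univ (a + T • 1) (k := n - k) (by simp)
    simp only [card_univ, Fintype.card_fin, Nat.sub_sub_self hk] at this
    simpa [esymm] using this.symm
  rw [key, eval_eq_sum_range' (n := n + 1) (by have := natDegree_hasseDeriv_le P (n - k); omega)]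
  refine sum_pos' (fun m _ => ?_) ⟨0, by simp, ?_⟩
  · rw [hasseDeriv_coeff]
    rcases le_or_gt (m + (n - k)) n with hm | hm
    · rw [hcoeff _ hm]
      have := esymm_pos_of_mem_gardingCone ha (j := n - (m + (n - k))) (by omega)
      positivity
    · rw [coeff_eq_zero_of_natDegree_lt (hdeg ▸ hm)]
      simp
  · simpa [hasseDeriv_coeff, hcoeff _ (Nat.sub_le n k), Nat.sub_sub_self hk] using
      esymm_pos_of_mem_gardingCone ha le_rfl

theorem add_smul_one_mem_gardingCone {a : Fin n → ℝ} (ha : a ∈ gardingCone n k) {T : ℝ}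
    (hT : 0 ≤ T) : a + T • 1 ∈ gardingCone n k := fun _ _ hjk =>
  esymm_add_smul_one_pos (gardingCone_antitone hjk ha) hT

theorem starConvex_gardingCone : StarConvex ℝ 1 (gardingCone n k) := by
  intro b hb s t hs ht hst
  rcases ht.eq_or_lt with rfl | ht
  · simpa [show s = 1 by linarith] using one_mem_gardingCone (le_of_mem_gardingCone hb)
  · have := smul_mem_gardingCone ht (add_smul_one_mem_gardingCone hb (div_nonneg hs ht.le))
    rwa [smul_add, smul_smul, mul_div_cancel₀ _ ht.ne', add_comm] at this

theorem isPreconnected_gardingCone (hk : k ≤ n) : IsPreconnected (gardingCone n k) :=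
  (starConvex_gardingCone.isPathConnected (one_mem_gardingCone hk)).isConnected.isPreconnected

theorem exists_sub_smul_one_mem_gardingCone {a : Fin n → ℝ} (ha : a ∈ gardingCone n k) :
    ∃ ε : ℝ, 0 < ε ∧ a - ε • 1 ∈ gardingCone n k := by
  have : ∀ᶠ ε in 𝓝 (0 : ℝ), a - ε • 1 ∈ gardingCone n k :=
    (continuous_const.sub (continuous_id.smul continuous_const)).continuousAt.preimage_mem_nhds
      (isOpen_gardingCone.mem_nhds (by simpa using ha))
  exact this.exists_gt

theorem esymmC_mul_add_ne_zero_of_mem_gardingCone (hk : k ≤ n) {w : Fin n → ℂ}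
    (hreal : ∀ c ∈ gardingCone n k, ∀ r : ℝ, esymmC k (fun i => r * c i + w i) ≠ 0)
    (hone : ∀ t : ℂ, 0 ≤ t.im → esymmC k (fun i => t + w i) ≠ 0)
    {c : Fin n → ℝ} (hc : c ∈ gardingCone n k) {t : ℂ} (ht : 0 ≤ t.im) :
    esymmC k (fun i => t * c i + w i) ≠ 0 := by
  have := Subtype.preconnectedSpace (isPreconnected_gardingCone hk)
  let p : gardingCone n k → ℂ[X] := fun c => lineEsymm k (fun i => (c.1 i : ℂ)) w
  have hp : ∀ c t, (p c).eval t = esymmC k (fun i => t * c.1 i + w i) :=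
    fun _ _ => eval_lineEsymm ..
  have hdeg : ∀ c, (p c).degree = k := fun c => degree_lineEsymm (by
    rw [esymmC_ofReal]
    exact_mod_cast (esymm_pos_of_mem_gardingCone c.2 le_rfl).ne') w
  have hcont : ∀ t, Continuous fun c => (p c).eval t := fun t => by
    simp_rw [hp]
    exact continuous_esymmC.comp
      ((by fun_prop : Continuous fun (c : Fin n → ℝ) i => t * c i + w i).comp continuous_subtype_val)
  simpa [hp] using eval_ne_zero_of_im_nonneg_of_preconnectedSpace hdeg hcont
    (fun c r => by simpa [hp] using hreal c.1 c.2 r) (y₀ := ⟨1, one_mem_gardingCone hk⟩)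
    (fun t ht => by simpa [hp] using hone t ht) ⟨c, hc⟩ ht

theorem esymmC_ne_zero_of_im_mem_gardingCone {z : Fin n → ℂ}
    (hz : (fun i => (z i).im) ∈ gardingCone n k) : esymmC k z ≠ 0 := by
  have hk := le_of_mem_gardingCone hz
  obtain ⟨ε, hε, hb⟩ := exists_sub_smul_one_mem_gardingCone hz
  have key := esymmC_mul_add_ne_zero_of_mem_gardingCone hk (w := fun i => (z i).re + ε * Complex.I)
    (fun c _ r => esymmC_ne_zero_of_forall_im_pos hk fun i => by simpa using hε)
    (fun t ht => esymmC_ne_zero_of_forall_im_pos hk fun i => by simp; linarith) hb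
    (t := Complex.I) (by simp)
  convert key using 2
  funext i
  apply Complex.ext <;> simp

theorem esymm_add_smul_ne_zero {a b : Fin n → ℝ} (ha : a ∈ gardingCone n k)
    (hb : b ∈ gardingCone n k) {τ : ℝ} (hτ : 0 ≤ τ) : esymm n k (a + τ • b) ≠ 0 := by
  have hk := le_of_mem_gardingCone ha
  have key := esymmC_mul_add_ne_zero_of_mem_gardingCone hk (w := fun i => Complex.I * a i)
    (fun c _ r => esymmC_ne_zero_of_im_mem_gardingCone (by simpa using ha))
    (fun t ht => esymmC_ne_zero_of_im_mem_gardingCone (by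
      convert add_smul_one_mem_gardingCone ha ht using 1
      funext i; simp [add_comm])) hb
    (t := Complex.I * τ) (by simp [hτ])
  have hI : (fun i => Complex.I * τ * b i + Complex.I * a i) =
      Complex.I • fun i => ((a + τ • b) i : ℂ) := by
    funext i; simp; ring
  rw [hI, esymmC_smul, esymmC_ofReal] at key
  exact fun h => key (by simp [h])

theorem esymm_add_pos {a b : Fin n → ℝ} (ha : a ∈ gardingCone n k) (hb : b ∈ gardingCone n k) :
    0 < esymm n k (a + b) := by
  by_contra! h
  have hcont : ContinuousOn (fun τ : ℝ => esymm n k (a + τ • b)) (Set.Icc 0 1) :=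
    (continuous_esymm.comp (continuous_const.add (continuous_id.smul continuous_const))).continuousOn
  obtain ⟨τ, hτ, hzero⟩ := intermediate_value_Icc' zero_le_one hcont
    ⟨by simpa using h, by simpa using (esymm_pos_of_mem_gardingCone ha le_rfl).le⟩
  exact esymm_add_smul_ne_zero ha hb hτ.1 hzero

theorem add_mem_gardingCone {a b : Fin n → ℝ} (ha : a ∈ gardingCone n k)
    (hb : b ∈ gardingCone n k) : a + b ∈ gardingCone n k := fun _ _ hjk =>
  esymm_add_pos (gardingCone_antitone hjk ha) (gardingCone_antitone hjk hb)

end GardingCone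

def gardingConvexCone (n k : ℕ) : ConvexCone ℝ (Fin n → ℝ) where
  carrier := gardingCone n k
  smul_mem' _ hc _ ha := smul_mem_gardingCone hc ha
  add_mem' _ ha _ hb := add_mem_gardingCone ha hb

theorem gardingCone_convex_general {n k : ℕ} :
    Convex ℝ (gardingCone n k) :=
  (gardingConvexCone n k).convex

/-- For every `1 ≤ k ≤ n`, the Gårding cone `Γₖ` is convex. -/
theorem gardingCone_convex {n k : ℕ} (hk1 : 1 ≤ k) (hkn : k ≤ n) :
    Convex ℝ (gardingCone n k) :=
  gardingCone_convex_general
end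

section
/- For every 2 ≤ k ≤ n, the quotient q_k(κ) = s_k(κ)/s_{k−1}(κ) is strictly monotone on the Gårding cone Γ_k: for every κ ∈ Γ_k and every index 1 ≤ i ≤ n, the partial derivative satisfies (∂q_k/∂κ_i)(κ) > 0. -/
/-!
Moving only the coordinate `κᵢ = b`, we have `sⱼ = σⱼ + b σⱼ₋₁`, where `σ` are the elementary
symmetric functions of the other `n - 1` coordinates. Hence `qₖ` is a Möbius function of `b`
with derivative `(σₖ₋₁² - σₖ σₖ₋₂) / sₖ₋₁²`. On `Γₖ` the `σⱼ` with `j < k` are positive, and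
the numerator is positive by the strict form of Newton's inequality `Eₚ Eₚ₊₂ ≤ Eₚ₊₁²` for the
normalized means `Eⱼ = σⱼ / (m choose j)`.

Newton's inequality for a multiset of `m` reals is reduced to the case `m = p + 2` by replacing
the multiset with the roots of the derivative of `∏ (X - a)`: by Rolle's theorem these are again
real and `m - 1` in number, and the means `Eⱼ` do not change. The case `m = p + 2` is an
induction on the multiset.
-/

open Finset Polynomial

theorem Nat.choose_mul_choose_add_two_lt_sq {m p : ℕ} (h : p + 2 ≤ m) :
    m.choose p * m.choose (p + 2) < m.choose (p + 1) ^ 2 := by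
  obtain ⟨r, rfl⟩ : ∃ r, m = p + 2 + r := ⟨m - (p + 2), by omega⟩
  have h₁ := Nat.choose_succ_right_eq (p + 2 + r) p
  have h₂ := Nat.choose_succ_right_eq (p + 2 + r) (p + 1)
  rw [show p + 2 + r - p = r + 2 by omega] at h₁
  rw [show p + 2 + r - (p + 1) = r + 1 by omega] at h₂
  have hpos := Nat.choose_pos (show p + 1 ≤ p + 2 + r by omega)
  have hcross : (p + 2 + r).choose p * (p + 2 + r).choose (p + 2) * ((r + 2) * (p + 2))
      = (p + 2 + r).choose (p + 1) ^ 2 * ((p + 1) * (r + 1)) := by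
    calc _ = ((p + 2 + r).choose p * (r + 2)) * ((p + 2 + r).choose (p + 2) * (p + 2)) := by ring
      _ = _ := by rw [← h₁, h₂]; ring
  refine Nat.lt_of_mul_lt_mul_right (a := (r + 2) * (p + 2)) ?_
  rw [hcross]
  exact Nat.mul_lt_mul_of_pos_left (by nlinarith) (pow_pos hpos 2)

theorem Polynomial.card_roots_derivative_eq_natDegree {p : ℝ[X]}
    (hp : Multiset.card p.roots = p.natDegree) :
    Multiset.card (derivative p).roots = (derivative p).natDegree := by
  refine le_antisymm (card_roots' _) ?_
  have := card_roots_le_derivative p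
  rw [natDegree_derivative]
  omega

namespace Multiset

theorem esymm_zero {R : Type*} [CommSemiring R] (s : Multiset R) : s.esymm 0 = 1 := by
  simp [esymm]

theorem esymm_cons_succ {R : Type*} [CommSemiring R] (a : R) (s : Multiset R) (j : ℕ) :
    (a ::ₘ s).esymm (j + 1) = s.esymm (j + 1) + a * s.esymm j := by
  simp [esymm, powersetCard_cons, sum_map_mul_left]

theorem esymm_eq_zero_of_card_lt {R : Type*} [CommSemiring R] {s : Multiset R} {j : ℕ}
    (h : card s < j) : s.esymm j = 0 := by
  simp [esymm, powersetCard_eq_empty _ h]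

theorem esymm_mul_esymm_le_of_card_eq_add_two {p : ℕ} {s : Multiset ℝ} (hs : card s = p + 2) :
    2 * (p + 2) * (s.esymm p * s.esymm (p + 2)) ≤ (p + 1) * s.esymm (p + 1) ^ 2 := by
  induction p generalizing s with
  | zero =>
    obtain ⟨x, y, rfl⟩ := card_eq_two.1 hs
    norm_num [esymm_zero]
    nlinarith [sq_nonneg (x - y)]
  | succ p ih =>
    obtain ⟨a, t, rfl, ht⟩ := card_eq_succ_iff.1 hs
    have hvan : t.esymm (p + 3) = 0 := esymm_eq_zero_of_card_lt (by omega)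
    rw [show p + 1 + 2 = (p + 2) + 1 by ring, show p + 1 + 1 = (p + 1) + 1 by ring,
      esymm_cons_succ, esymm_cons_succ, esymm_cons_succ, hvan]
    push_cast
    -- with `m = p + 2`, `A, B, C = eₘ₋₁, eₘ, eₘ₋₂` of `t`, `m` times the new gap is
    -- `(m B - a A)² + a² (m + 1)` times the old one
    nlinarith [sq_nonneg ((p + 2) * t.esymm (p + 2) - a * t.esymm (p + 1)),
      mul_nonneg (sq_nonneg a) (sub_nonneg.2 (ih ht))]

/-- `t` is the multiset of roots of the derivative of `∏ a ∈ s, (X - a)`. -/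
theorem exists_card_eq_mul_esymm_eq {m : ℕ} {s : Multiset ℝ} (hs : card s = m + 1) :
    ∃ t : Multiset ℝ, card t = m ∧
      ∀ i ≤ m, ((m : ℝ) + 1 - i) * s.esymm i = (m + 1) * t.esymm i := by
  set P := (s.map fun a => X - C a).prod
  have hP : P.natDegree = m + 1 := by rw [natDegree_multiset_prod_X_sub_C_eq_card, hs]
  have hP' : (derivative P).natDegree = m := by rw [natDegree_derivative, hP]; rfl
  have hroots : card (derivative P).roots = (derivative P).natDegree :=
    card_roots_derivative_eq_natDegree (by rw [roots_multiset_prod_X_sub_C, hP, hs])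
  have hlead : (derivative P).leadingCoeff = m + 1 := by
    rw [leadingCoeff, hP', coeff_derivative, ← hP, (monic_multisetProd_X_sub_C s).coeff_natDegree]
    ring
  refine ⟨(derivative P).roots, hroots.trans hP', fun i hi => ?_⟩
  have hcoeff := congrArg (coeff · (m - i)) (C_leadingCoeff_mul_prod_multiset_X_sub_C hroots)
  simp only [coeff_C_mul, coeff_derivative, hlead] at hcoeff
  rw [prod_X_sub_C_coeff _ (by omega), prod_X_sub_C_coeff _ (by omega), hroots, hP', hs,
    show m - (m - i) = i by omega, show m + 1 - (m - i + 1) = i by omega,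
    Nat.cast_sub hi] at hcoeff
  have hsign : (-1 : ℝ) ^ i * (-1) ^ i = 1 := by rw [← mul_pow]; norm_num
  linear_combination -(-1 : ℝ) ^ i * hcoeff
    + ((m + 1) * (derivative P).roots.esymm i - (m + 1 - i) * s.esymm i) * hsign

/-- Newton's inequality. -/
theorem esymm_div_choose_mul_le_sq (s : Multiset ℝ) (p : ℕ) :
    s.esymm p / (card s).choose p * (s.esymm (p + 2) / (card s).choose (p + 2))
      ≤ (s.esymm (p + 1) / (card s).choose (p + 1)) ^ 2 := by
  rcases lt_or_ge (card s) (p + 2) with h | h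
  · rw [esymm_eq_zero_of_card_lt h, zero_div, mul_zero]
    positivity
  obtain ⟨m, hm⟩ : ∃ m, card s = m := ⟨_, rfl⟩
  rw [hm] at h ⊢
  induction m, h using Nat.le_induction generalizing s with
  | base =>
    have hchoose : ((p + 2).choose p : ℝ) * 2 = (p + 2) * (p + 1) := by
      have := Nat.choose_succ_right_eq (p + 2) p
      rw [Nat.choose_succ_self_right, show p + 2 - p = 2 by omega] at this
      exact_mod_cast this.symm
    have hpos : (0 : ℝ) < (p + 2).choose p := by exact_mod_cast Nat.choose_pos (by omega)
    rw [Nat.choose_self, Nat.choose_succ_self_right, div_mul_div_comm, div_pow,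
      div_le_div_iff₀ (by positivity) (by positivity)]
    push_cast
    nlinarith [esymm_mul_esymm_le_of_card_eq_add_two hm]
  | succ m hpm ih =>
    obtain ⟨t, ht, heq⟩ := exists_card_eq_mul_esymm_eq hm
    have hmean : ∀ i ≤ m, s.esymm i / (m + 1).choose i = t.esymm i / m.choose i := by
      intro i hi
      have hc : (m.choose i : ℝ) * (m + 1) = (m + 1).choose i * ((m : ℝ) + 1 - i) := by
        have := congrArg (Nat.cast : ℕ → ℝ) (Nat.choose_mul_succ_eq m i)
        push_cast [Nat.cast_sub (show i ≤ m + 1 by omega)] at this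
        exact this
      have h₁ : (0 : ℝ) < (m + 1).choose i := by exact_mod_cast Nat.choose_pos (by omega)
      have h₂ : (0 : ℝ) < m.choose i := by exact_mod_cast Nat.choose_pos hi
      rw [div_eq_div_iff h₁.ne' h₂.ne']
      refine mul_left_cancel₀ (show (m : ℝ) + 1 ≠ 0 by positivity) ?_
      linear_combination s.esymm i * hc + ((m + 1).choose i : ℝ) * heq i hi
    rw [hmean p (by omega), hmean (p + 1) (by omega), hmean (p + 2) hpm]
    exact ih t ht

theorem esymm_mul_esymm_lt_sq {s : Multiset ℝ} {p : ℕ} (h₀ : 0 < s.esymm p)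
    (h₂ : 0 < s.esymm (p + 2)) : s.esymm p * s.esymm (p + 2) < s.esymm (p + 1) ^ 2 := by
  have hcard : p + 2 ≤ card s := by
    by_contra! h
    exact h₂.ne' (esymm_eq_zero_of_card_lt h)
  have hc₀ : (0 : ℝ) < (card s).choose p := by exact_mod_cast Nat.choose_pos (by omega)
  have hc₁ : (0 : ℝ) < (card s).choose (p + 1) := by exact_mod_cast Nat.choose_pos (by omega)
  have hc₂ : (0 : ℝ) < (card s).choose (p + 2) := by exact_mod_cast Nat.choose_pos hcard
  have hchoose : ((card s).choose p : ℝ) * (card s).choose (p + 2) < (card s).choose (p + 1) ^ 2 := by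
    exact_mod_cast Nat.choose_mul_choose_add_two_lt_sq hcard
  have hnewton := esymm_div_choose_mul_le_sq s p
  rw [div_mul_div_comm, div_pow, div_le_div_iff₀ (by positivity) (by positivity)] at hnewton
  have hsq : 0 < s.esymm (p + 1) ^ 2 := by nlinarith [mul_pos h₀ h₂, mul_pos hc₀ hc₂]
  nlinarith [mul_lt_mul_of_pos_left hchoose hsq]

theorem esymm_pos_of_esymm_cons_pos {a : ℝ} {s : Multiset ℝ} {k : ℕ}
    (h : ∀ j, 1 ≤ j → j ≤ k → 0 < (a ::ₘ s).esymm j) : ∀ j < k, 0 < s.esymm j := by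
  intro j hj
  induction j with
  | zero => simp [esymm_zero]
  | succ j ih =>
    have hσ₀ := ih (by omega)
    by_contra! hσ₁
    have h₁ := h (j + 1) (by omega) (by omega)
    have h₂ := h (j + 2) (by omega) (by omega)
    rw [esymm_cons_succ] at h₁ h₂
    have ha : 0 < a := by nlinarith
    have hσ₂ : 0 < s.esymm (j + 2) := by nlinarith
    -- `σⱼ₊₁ ≤ 0 < σⱼ₊₁ + a σⱼ` and `0 < σⱼ₊₂ + a σⱼ₊₁` force `σⱼ₊₁² < σⱼ σⱼ₊₂`
    nlinarith [esymm_mul_esymm_lt_sq hσ₀ hσ₂, mul_nonneg (neg_nonneg.2 hσ₁) h₁.le,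
      mul_pos hσ₀ h₂]

theorem esymm_mul_esymm_lt_sq_of_esymm_cons_pos {a : ℝ} {s : Multiset ℝ} {p : ℕ}
    (h : ∀ j, 1 ≤ j → j ≤ p + 2 → 0 < (a ::ₘ s).esymm j) :
    s.esymm p * s.esymm (p + 2) < s.esymm (p + 1) ^ 2 := by
  have hσ := esymm_pos_of_esymm_cons_pos h
  rcases le_or_gt (s.esymm (p + 2)) 0 with h₂ | h₂
  · nlinarith [hσ p (by omega), hσ (p + 1) (by omega)]
  · exact esymm_mul_esymm_lt_sq (hσ p (by omega)) h₂

theorem hasDerivAt_esymm_cons_div_esymm_cons (s : Multiset ℝ) (p : ℕ) {a : ℝ}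
    (ha : (a ::ₘ s).esymm (p + 1) ≠ 0) :
    HasDerivAt (fun b => (b ::ₘ s).esymm (p + 2) / (b ::ₘ s).esymm (p + 1))
      ((s.esymm (p + 1) ^ 2 - s.esymm p * s.esymm (p + 2)) / (a ::ₘ s).esymm (p + 1) ^ 2) a := by
  have hline : ∀ j, HasDerivAt (fun b => (b ::ₘ s).esymm (j + 1)) (s.esymm j) a := fun j => by
    simp only [esymm_cons_succ]
    simpa using ((hasDerivAt_id a).mul_const (s.esymm j)).const_add (s.esymm (j + 1))
  refine ((hline (p + 1)).fun_div (hline p) ha).congr_deriv ?_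
  rw [esymm_cons_succ, esymm_cons_succ]
  ring

end Multiset

theorem esymm_update_eq {n : ℕ} (k : ℕ) (x : Fin n → ℝ) (i : Fin n) (b : ℝ) :
    esymm n k (Function.update x i b) = (b ::ₘ (univ.erase i).val.map x).esymm k := by
  have hrest : (univ.erase i).val.map (Function.update x i b) = (univ.erase i).val.map x :=
    Multiset.map_congr rfl fun l hl => Function.update_of_ne (ne_of_mem_erase (mem_def.2 hl)) _ _
  rw [← Function.update_self i b x, ← hrest, ← Multiset.map_cons, erase_val,
    Multiset.cons_erase (mem_univ _), Finset.esymm_map_val, Function.update_self]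
  rfl

theorem differentiable_esymm (n k : ℕ) : Differentiable ℝ (esymm n k) := by
  unfold esymm
  fun_prop

theorem esymm_quotient_strictly_monotone_on_gardingCone_general {n k : ℕ}
    (hk2 : 2 ≤ k)
    (κ : Fin n → ℝ) (hκ : κ ∈ gardingCone n k) (i : Fin n) :
    0 < fderiv ℝ (fun x => esymm n k x / esymm n (k - 1) x) κ (Pi.single i 1) := by
  obtain ⟨p, rfl⟩ : ∃ p, k = p + 2 := ⟨k - 2, by omega⟩
  set q : (Fin n → ℝ) → ℝ := fun x => esymm n (p + 2) x / esymm n (p + 1) x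
  set s := (univ.erase i).val.map κ
  have hsplit : ∀ j, esymm n j κ = (κ i ::ₘ s).esymm j := fun j => by
    rw [← esymm_update_eq, Function.update_eq_self]
  have hcone : ∀ j, 1 ≤ j → j ≤ p + 2 → 0 < (κ i ::ₘ s).esymm j := fun j hj₁ hj₂ =>
    hsplit j ▸ hκ j hj₁ hj₂
  have hden : (κ i ::ₘ s).esymm (p + 1) ≠ 0 := (hcone (p + 1) (by omega) (by omega)).ne'
  have hq : HasFDerivAt q (fderiv ℝ q κ) (Function.update κ i (κ i)) := by
    rw [Function.update_eq_self]
    refine DifferentiableAt.hasFDerivAt ?_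
    simp only [q, div_eq_mul_inv]
    exact (differentiable_esymm n _ κ).mul ((differentiable_esymm n _ κ).inv (by rwa [hsplit]))
  have hline := hq.comp_hasDerivAt (κ i) (hasDerivAt_update κ i (κ i))
  simp only [Function.comp_def, q, esymm_update_eq] at hline
  change 0 < fderiv ℝ q κ (Pi.single i 1)
  rw [hline.unique (Multiset.hasDerivAt_esymm_cons_div_esymm_cons s p hden)]
  exact div_pos (sub_pos.2 (Multiset.esymm_mul_esymm_lt_sq_of_esymm_cons_pos hcone))
    (by positivity)

/-- For `2 ≤ k ≤ n`, the quotient `qₖ = sₖ / s_{k−1}` is strictly monotone on the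
Gårding cone `Γₖ`: all partial derivatives `∂qₖ/∂κᵢ` are positive there. -/
theorem esymm_quotient_strictly_monotone_on_gardingCone {n k : ℕ}
    (hk2 : 2 ≤ k) (hkn : k ≤ n)
    (κ : Fin n → ℝ) (hκ : κ ∈ gardingCone n k) (i : Fin n) :
    0 < fderiv ℝ (fun x => esymm n k x / esymm n (k - 1) x) κ (Pi.single i 1) :=
  esymm_quotient_strictly_monotone_on_gardingCone_general hk2 κ hκ i
end

section
/- Let Γ ⊆ ℝⁿ be an open convex cone that is invariant under permutations of the coordinates and contains the point (1, …, 1). Let f : Γ → ℝ be concave, symmetric, positively homogeneous of degree one (f(λκ) = λ f(κ) for all λ > 0 and κ ∈ Γ), and satisfy f(1, …, 1) = n. Then f(κ) ≤ κ_1 + ⋯ + κ_n for every κ ∈ Γ. -/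
/-- A concave, symmetric, 1-homogeneous function `f` on an open convex
permutation-invariant cone `Γ ∋ (1,…,1)` with `f(1,…,1) = n` satisfies
`f(κ) ≤ κ₁ + ⋯ + κₙ` on `Γ`. -/
theorem concave_homogeneous_le_trace {n : ℕ}
    (Γ : Set (Fin n → ℝ)) (hΓopen : IsOpen Γ) (hΓconv : Convex ℝ Γ)
    (hΓcone : ∀ (lam : ℝ), 0 < lam → ∀ κ ∈ Γ, lam • κ ∈ Γ)
    (hΓsymm : ∀ (π : Equiv.Perm (Fin n)) (κ : Fin n → ℝ), κ ∈ Γ → (κ ∘ π) ∈ Γ)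
    (hone : (fun _ : Fin n => (1 : ℝ)) ∈ Γ)
    (f : (Fin n → ℝ) → ℝ)
    (hfconc : ∀ κ ∈ Γ, ∀ lam ∈ Γ, ∀ t : ℝ, 0 ≤ t → t ≤ 1 →
      t * f κ + (1 - t) * f lam ≤ f (t • κ + (1 - t) • lam))
    (hfsymm : ∀ (π : Equiv.Perm (Fin n)) (κ : Fin n → ℝ), κ ∈ Γ → f (κ ∘ π) = f κ)
    (hfhom : ∀ (lam : ℝ), 0 < lam → ∀ κ ∈ Γ, f (lam • κ) = lam * f κ)
    (hfone : f (fun _ : Fin n => (1 : ℝ)) = n) :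
    ∀ κ ∈ Γ, f κ ≤ ∑ i, κ i := by
  -- Concavity as a ConcaveOn statement
  have hconc : ConcaveOn ℝ Γ f := by
    refine ⟨hΓconv, fun x hx y hy a b ha hb hab => ?_⟩
    have hb' : b = 1 - a := by linarith
    have := hfconc x hx y hy a ha (by linarith)
    subst hb'
    simpa [smul_eq_mul] using this
  -- f (c • 1) ≤ c * n whenever c • 1 ∈ Γ
  have key : ∀ c : ℝ, (c • (fun _ : Fin n => (1 : ℝ))) ∈ Γ →
      f (c • (fun _ : Fin n => (1 : ℝ))) ≤ c * n := by
    intro c hc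
    set v : Fin n → ℝ := fun _ => 1 with hv
    set μ : ℝ := |c| + 1 with hμ
    have hμpos : 0 < μ := by positivity
    have hcμ : 0 < (c + μ) / 2 := by
      have : -|c| ≤ c := neg_abs_le c
      have : 0 < c + μ := by simp only [hμ]; linarith
      linarith
    have hμmem : μ • v ∈ Γ := hΓcone μ hμpos v hone
    have hconcav := hfconc (c • v) hc (μ • v) hμmem (1/2) (by norm_num) (by norm_num)
    have hpt : ((1:ℝ)/2) • (c • v) + (1 - 1/2 : ℝ) • (μ • v) = ((c + μ)/2) • v := by
      funext j
      simp [v, smul_eq_mul]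
      ring
    rw [hpt] at hconcav
    have h1 : f (((c + μ)/2) • v) = ((c + μ)/2) * n := by
      rw [hfhom _ hcμ v hone, hv, hfone]
    have h2 : f (μ • v) = μ * n := by
      rw [hfhom _ hμpos v hone, hv, hfone]
    rw [h1, h2] at hconcav
    nlinarith [hconcav]
  intro κ hκ
  rcases Nat.eq_zero_or_pos n with hn | hn
  · subst hn
    have : κ = (fun _ : Fin 0 => (1:ℝ)) := by funext j; exact j.elim0
    rw [this, hfone]
    simp
  haveI : NeZero n := ⟨hn.ne'⟩
  set s : ℝ := ∑ i, κ i with hs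
  set c : ℝ := s / n with hc
  -- averaging over cyclic shifts
  set z : Fin n → (Fin n → ℝ) := fun k => κ ∘ (Equiv.addLeft k) with hz
  have hzmem : ∀ k : Fin n, z k ∈ Γ := fun k => hΓsymm (Equiv.addLeft k) κ hκ
  have hzval : ∀ k : Fin n, f (z k) = f κ := fun k => hfsymm (Equiv.addLeft k) κ hκ
  have hw0 : ∀ k ∈ (Finset.univ : Finset (Fin n)), (0:ℝ) ≤ (n : ℝ)⁻¹ := by
    intro k _; positivity
  have hw1 : ∑ _k : Fin n, (n : ℝ)⁻¹ = 1 := by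
    rw [Finset.sum_const, Finset.card_univ, Fintype.card_fin, nsmul_eq_mul]
    field_simp
  have havg : (∑ k : Fin n, (n : ℝ)⁻¹ • z k) = c • (fun _ : Fin n => (1:ℝ)) := by
    funext j
    have hsum : ∑ k : Fin n, κ (k + j) = s := by
      rw [hs]
      exact Equiv.sum_comp (Equiv.addRight j) κ
    simp only [Finset.sum_apply, Pi.smul_apply, hz, Function.comp_apply,
      Equiv.coe_addLeft, smul_eq_mul]
    rw [← Finset.mul_sum]
    have : ∑ k : Fin n, κ (k + j) = s := hsum
    rw [this, hc]
    field_simp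
  have hjensen := hconc.le_map_sum hw0 hw1 (fun k _ => hzmem k)
  rw [havg] at hjensen
  have hlhs : (∑ k : Fin n, (n : ℝ)⁻¹ • f (z k)) = f κ := by
    simp only [hzval, smul_eq_mul, Finset.sum_const, Finset.card_univ, Fintype.card_fin,
      nsmul_eq_mul]
    field_simp
  rw [hlhs] at hjensen
  have hcmem : c • (fun _ : Fin n => (1:ℝ)) ∈ Γ := by
    rw [← havg]
    exact hΓconv.sum_mem hw0 hw1 (fun k _ => hzmem k)
  have := key c hcmem
  have hcn : c * n = s := by
    rw [hc]; field_simp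
  linarith
end

section
/- (Hamilton's trick) Let X be a compact topological space and f : ℝ × X → ℝ a continuous function such that the partial derivative ∂f/∂t exists and is continuous on ℝ × X. Define φ(t) = max_{x ∈ X} f(t, x). Then φ is locally Lipschitz on ℝ, and at every point t₀ where φ is differentiable, φ'(t₀) = (∂f/∂t)(t₀, x₀) for every x₀ ∈ X attaining the maximum, i.e., every x₀ with f(t₀, x₀) = φ(t₀). -/
open Set

/-- Hamilton's trick: if `X` is a nonempty compact space, `f : ℝ × X → ℝ` is continuous
and has a continuous partial time derivative `g = ∂f/∂t`, then
`φ(t) = max_{x ∈ X} f(t,x)` is locally Lipschitz, and at every point `t₀` where `φ` is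
differentiable one has `φ'(t₀) = g(t₀, x₀)` for every maximizer `x₀`. -/
theorem hamiltons_trick {X : Type*} [TopologicalSpace X] [CompactSpace X] [Nonempty X]
    (f : ℝ × X → ℝ) (hf : Continuous f)
    (g : ℝ × X → ℝ) (hg : Continuous g)
    (hderiv : ∀ (x : X) (t : ℝ), HasDerivAt (fun s => f (s, x)) (g (t, x)) t) :
    LocallyLipschitz (fun t => sSup (Set.range fun x => f (t, x))) ∧
    ∀ (t₀ d : ℝ),
      HasDerivAt (fun t => sSup (Set.range fun x => f (t, x))) d t₀ →
      ∀ x₀ : X, f (t₀, x₀) = sSup (Set.range fun x => f (t₀, x)) →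
        d = g (t₀, x₀) := by
  set φ : ℝ → ℝ := fun t => sSup (Set.range fun x => f (t, x)) with hφ
  -- basic facts about φ
  have hcomp : ∀ t : ℝ, IsCompact (Set.range fun x : X => f (t, x)) := fun t =>
    isCompact_range (hf.comp (by continuity))
  have hbdd : ∀ t : ℝ, BddAbove (Set.range fun x : X => f (t, x)) := fun t =>
    (hcomp t).bddAbove
  have hle : ∀ (t : ℝ) (x : X), f (t, x) ≤ φ t := fun t x =>
    le_csSup (hbdd t) ⟨x, rfl⟩
  have hmem : ∀ t : ℝ, ∃ x : X, f (t, x) = φ t := by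
    intro t
    have := (hcomp t).sSup_mem (range_nonempty _)
    exact this
  constructor
  · -- locally Lipschitz
    intro t₀
    obtain ⟨C, hC⟩ := ((isCompact_Icc (a := t₀ - 1) (b := t₀ + 1)).prod
      isCompact_univ).exists_bound_of_continuousOn hg.continuousOn
    refine ⟨C.toNNReal, Icc (t₀ - 1) (t₀ + 1), Icc_mem_nhds (by linarith) (by linarith), ?_⟩
    have hxlip : ∀ x : X, LipschitzOnWith C.toNNReal (fun s => f (s, x))
        (Icc (t₀ - 1) (t₀ + 1)) := by
      intro x
      apply (convex_Icc _ _).lipschitzOnWith_of_nnnorm_hasDerivWithin_le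
        (f' := fun s => g (s, x))
        (fun s hs => (hderiv x s).hasDerivWithinAt)
      intro s hs
      rw [← NNReal.coe_le_coe, coe_nnnorm, Real.coe_toNNReal']
      exact le_max_of_le_left (hC (s, x) ⟨hs, mem_univ _⟩)
    intro s hs u hu
    rw [edist_dist, Real.dist_eq]
    have key : ∀ a b : ℝ, a ∈ Icc (t₀ - 1) (t₀ + 1) → b ∈ Icc (t₀ - 1) (t₀ + 1) →
        φ a - φ b ≤ C.toNNReal * |a - b| := by
      intro a b ha hb
      obtain ⟨x, hx⟩ := hmem a
      have h1 := (hxlip x) ha hb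
      rw [edist_dist, edist_dist, Real.dist_eq, ENNReal.ofReal_le_iff_le_toReal
        (by simp [ENNReal.mul_eq_top])] at h1
      have h2 : |f (a, x) - f (b, x)| ≤ C.toNNReal * |a - b| := by
        calc |f (a, x) - f (b, x)| ≤ _ := h1
          _ = C.toNNReal * |a - b| := by
            rw [ENNReal.toReal_mul, ENNReal.coe_toReal, ENNReal.toReal_ofReal dist_nonneg,
              Real.dist_eq]
      calc φ a - φ b = f (a, x) - φ b := by rw [hx]
        _ ≤ f (a, x) - f (b, x) := by linarith [hle b x]
        _ ≤ |f (a, x) - f (b, x)| := le_abs_self _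
        _ ≤ _ := h2
    have habs : |φ s - φ u| ≤ C.toNNReal * |s - u| := by
      rcases abs_cases (φ s - φ u) with ⟨h, _⟩ | ⟨h, _⟩
      · rw [h]; exact key s u hs hu
      · rw [h]
        have := key u s hu hs
        rw [abs_sub_comm] at this
        linarith
    rw [edist_dist, Real.dist_eq, ← ENNReal.ofReal_coe_nnreal,
      ← ENNReal.ofReal_mul (by positivity)]
    exact ENNReal.ofReal_le_ofReal habs
  · -- the derivative identity
    intro t₀ d hd x₀ hx₀
    have hmin : IsLocalMin (fun t => φ t - f (t, x₀)) t₀ := by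
      apply Filter.Eventually.of_forall
      intro t
      simp only [hx₀]
      have h := hle t x₀
      simp only [hφ] at h ⊢
      linarith
    have hD : HasDerivAt (fun t => φ t - f (t, x₀)) (d - g (t₀, x₀)) t₀ :=
      hd.sub (hderiv x₀ t₀)
    have := hmin.hasDerivAt_eq_zero hD
    linarith
end
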